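/- arXiv:2006.04459 — 3 statements merged into one kernel-verified Lean document; each statement's English description precedes it below -/
import Mathlib

section
/- Let (Ω, F, m) be a measure space and (Q_n) a decreasing sequence of sub-σ-algebras with m σ-finite on each Q_n, and let Q_∞ = ⋂_n Q_n. If every Q_∞-measurable set has m-measure 0 or +∞, then for every f ∈ L¹(Ω, F, m), the a.e. limit ψ of the backwards martingale E_m(f | Q_n) is 0 m-almost everywhere. -/
open MeasureTheory Filter

/-- If the tail σ-algebra `Q∞ = ⋂ n, Q n` carries only sets of measure `0` or `∞`,
then the a.e. limit `ψ` of the backwards martingale `m[f | Q n]` vanishes a.e. -/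
theorem backwards_martingale_limit_zero_of_tail_trivial
    {Ω : Type*} {F : MeasurableSpace Ω} (m : Measure Ω)
    (Q : ℕ → MeasurableSpace Ω) (hQF : ∀ n, Q n ≤ F) (hmono : Antitone Q)
    (hσ : ∀ n, SigmaFinite (m.trim (hQF n)))
    (htail : ∀ A : Set Ω, MeasurableSet[⨅ n, Q n] A → m A = 0 ∨ m A = ⊤)
    (f : Ω → ℝ) (hf : Integrable f m)
    (ψ : Ω → ℝ) (hψ : Integrable ψ m)
    (hlim : ∀ᵐ x ∂m, Tendsto (fun n => (m[f|Q n]) x) atTop (nhds (ψ x))) :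
    ψ =ᵐ[m] 0 := by
  set u : ℕ → Ω → ℝ := fun k => m[f|Q k] with hu_def
  have hu : ∀ k, StronglyMeasurable[Q k] (u k) := fun k => stronglyMeasurable_condExp
  set s : Set Ω := {x | ∃ c, Tendsto (fun k => u k x) atTop (nhds c)} with hs_def
  -- the convergence set is measurable w.r.t. every `Q n`
  have hshift : ∀ (n : ℕ) (x : Ω) (c : ℝ),
      Tendsto (fun k => u (n + k) x) atTop (nhds c) ↔
        Tendsto (fun k => u k x) atTop (nhds c) := by
    intro n x c
    simp_rw [add_comm n]
    exact tendsto_add_atTop_iff_nat (f := fun k => u k x) n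
  have hs_meas : ∀ n, MeasurableSet[Q n] s := by
    intro n
    have : s = {x | ∃ c, Tendsto (fun k => u (n + k) x) atTop (nhds c)} := by
      ext x
      simp only [hs_def, Set.mem_setOf_eq]
      exact exists_congr fun c => (hshift n x c).symm
    rw [this]
    have hms : ∀ k, Measurable[Q n] fun x => u (n + k) x := fun k =>
      ((hu (n + k)).mono (hmono (Nat.le_add_right n k))).measurable
    letI : MeasurableSpace Ω := Q n
    exact measurableSet_exists_tendsto hms
  -- the limit function
  classical
  set g : Ω → ℝ := fun x => if h : x ∈ s then h.choose else 0 with hg_def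
  have hgs : ∀ x (h : x ∈ s), Tendsto (fun k => u k x) atTop (nhds (g x)) := by
    intro x h
    simpa [hg_def, dif_pos h] using h.choose_spec
  have hg_sm : ∀ n, StronglyMeasurable[Q n] g := by
    intro n
    set w : ℕ → Ω → ℝ := fun k x => if x ∈ s then u (n + k) x else 0 with hw_def
    have hw : ∀ k, StronglyMeasurable[Q n] (w k) := by
      intro k
      exact StronglyMeasurable.ite (hs_meas n)
        ((hu (n + k)).mono (hmono (Nat.le_add_right n k))) stronglyMeasurable_const
    refine stronglyMeasurable_of_tendsto atTop hw ?_
    rw [tendsto_pi_nhds]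
    intro x
    by_cases hx : x ∈ s
    · have := hgs x hx
      simp only [hw_def, if_pos hx]
      exact ((hshift n x (g x)).2 this)
    · simp only [hw_def, if_neg hx, hg_def, dif_neg hx]
      exact tendsto_const_nhds
  have hg_meas : Measurable[⨅ n, Q n] g := by
    intro t ht
    exact MeasurableSpace.measurableSet_iInf.2 fun n => (hg_sm n).measurable ht
  -- `ψ =ᵐ[m] g`
  have hψg : ψ =ᵐ[m] g := by
    filter_upwards [hlim] with x hx
    have hxs : x ∈ s := ⟨ψ x, hx⟩
    exact tendsto_nhds_unique hx (hgs x hxs)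
  have hg_int : Integrable g m := hψ.congr hψg
  -- `g =ᵐ[m] 0`
  have hg0 : g =ᵐ[m] 0 := by
    have hnull : m {x | g x ≠ 0} = 0 := by
      have hU : {x | g x ≠ 0} = ⋃ k : ℕ, {x | (1 : ℝ) / (k + 1) ≤ ‖g x‖} := by
        ext x
        simp only [Set.mem_setOf_eq, Set.mem_iUnion]
        constructor
        · intro hx
          have hpos : 0 < ‖g x‖ := norm_pos_iff.2 hx
          obtain ⟨k, hk⟩ := exists_nat_one_div_lt hpos
          exact ⟨k, le_of_lt hk⟩
        · rintro ⟨k, hk⟩ h0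
          rw [h0, norm_zero] at hk
          have hpos : (0 : ℝ) < 1 / (k + 1) := by positivity
          linarith
      rw [hU]
      refine measure_iUnion_null fun k => ?_
      have hA : MeasurableSet[⨅ n, Q n] {x | (1 : ℝ) / (k + 1) ≤ ‖g x‖} :=
        hg_meas (measurableSet_le measurable_const measurable_norm)
      have hfin : m {x | (1 : ℝ) / (k + 1) ≤ ‖g x‖} < ⊤ :=
        hg_int.measure_norm_ge_lt_top (by positivity)
      rcases htail _ hA with h | h
      · exact h
      · exact absurd h hfin.ne
    filter_upwards [measure_eq_zero_iff_ae_notMem.1 hnull] with x hx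
    simpa using hx
  exact hψg.trans hg0
end

section
/- Let Γ be a locally compact second countable group acting continuously on a locally compact second countable space X preserving a Radon measure λ, and μ a probability measure on Γ whose support generates Γ as a closed group. Suppose ψ ∈ L²(X, λ) satisfies P_μ ψ = ψ λ-a.e., where P_μ ψ(x) = ∫_Γ ψ(gx) dμ(g). Then ψ is Γ-invariant: for every g ∈ Γ, ψ ∘ g = ψ λ-almost everywhere. -/
/-!
Each translate `ψ ∘ g` has the same `L²` norm as `ψ`, and `P_μ ψ = ψ` makes `ψ` the `μ`-average of
its translates. Pairing with `ψ` gives `∫ ⟪ψ ∘ g, ψ⟫ dμ(g) = ‖ψ‖²`, so by Cauchy–Schwarz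
`ψ ∘ g = ψ` for `μ`-a.e. `g`. The a.e. stabilizer of `ψ` is a subgroup, closed because
`g ↦ ψ ∘ g` is continuous into `L²`; it contains the support of `μ`, hence is all of `Γ`.
-/

open MeasureTheory Filter Set
open scoped ENNReal symmDiff Topology InnerProductSpace

theorem ae_eq_of_norm_le_of_integral_inner_eq_norm_sq {E : Type*} [NormedAddCommGroup E]
    [InnerProductSpace ℝ E] {Ω : Type*} [MeasurableSpace Ω] {μ : Measure Ω}
    [IsProbabilityMeasure μ] {f : Ω → E} {v : E} (hf : ∀ᵐ ω ∂μ, ‖f ω‖ ≤ ‖v‖)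
    (hfv : ∫ ω, ⟪f ω, v⟫_ℝ ∂μ = ‖v‖ ^ 2) : ∀ᵐ ω ∂μ, f ω = v := by
  by_cases hint : Integrable (fun ω => ⟪f ω, v⟫_ℝ) μ
  · have hle : ∀ᵐ ω ∂μ, 0 ≤ ‖v‖ ^ 2 - ⟪f ω, v⟫_ℝ := by
      filter_upwards [hf] with ω hω
      nlinarith [real_inner_le_norm (f ω) v, norm_nonneg v]
    have hgap : ∫ ω, (‖v‖ ^ 2 - ⟪f ω, v⟫_ℝ) ∂μ = 0 := by
      rw [integral_sub (integrable_const _) hint, hfv]; simp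
    filter_upwards [hf, (integral_eq_zero_iff_of_nonneg_ae hle
      ((integrable_const _).sub hint)).1 hgap] with ω hω hω'
    have hinner : ⟪f ω, v⟫_ℝ = ‖v‖ ^ 2 := by simp only [Pi.zero_apply] at hω'; linarith
    have hsq : ‖f ω - v‖ ^ 2 ≤ 0 := by
      rw [norm_sub_sq_real, hinner]; nlinarith [norm_nonneg (f ω)]
    rw [← sub_eq_zero, ← norm_eq_zero]
    nlinarith [norm_nonneg (f ω - v)]
  · -- The junk value `0` of the integral forces `v = 0`.
    have hv : v = 0 := by
      rw [integral_undef hint] at hfv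
      simpa using hfv.symm
    filter_upwards [hf] with ω hω
    simpa [hv] using hω

section PreimageContinuity

variable {X Y : Type*} [MeasurableSpace X] [TopologicalSpace Y] [MeasurableSpace Y]
  [OpensMeasurableSpace Y] {μ : Measure X} {ν : Measure Y}
  {ι : Type*} {l : Filter ι} [l.IsCountablyGenerated] {f : ι → X → Y} {g : X → Y}

/- Unlike `tendsto_measure_symmDiff_preimage_nhds_zero`, this needs no separation axiom: for open
`U` the set `g ⁻¹' U \ f i ⁻¹' U` shrinks pointwise to `∅`, and measure preservation makes the
other half of the symmetric difference equally small. -/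
theorem tendsto_measure_symmDiff_preimage_of_isOpen (hf : ∀ i, MeasurePreserving (f i) μ ν)
    (hg : MeasurePreserving g μ ν) (hfg : ∀ x, Tendsto (f · x) l (𝓝 (g x)))
    {U : Set Y} (hU : IsOpen U) (hνU : ν U ≠ ∞) :
    Tendsto (fun i => μ ((f i ⁻¹' U) ∆ (g ⁻¹' U))) l (𝓝 0) := by
  have hfU i : MeasurableSet (f i ⁻¹' U) := (hf i).measurable hU.measurableSet
  have hgU : MeasurableSet (g ⁻¹' U) := hg.measurable hU.measurableSet
  have hμgU : μ (g ⁻¹' U) ≠ ∞ := by rwa [hg.measure_preimage hU.measurableSet.nullMeasurableSet]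
  have hlost : Tendsto (fun i => μ (g ⁻¹' U \ f i ⁻¹' U)) l (𝓝 0) := by
    refine measure_empty (μ := μ) ▸ tendsto_measure_of_tendsto_indicator l
      (fun i => hgU.diff (hfU i)) hgU hμgU (.of_forall fun i => sdiff_subset) fun x => ?_
    by_cases hx : g x ∈ U
    · filter_upwards [hfg x (hU.mem_nhds hx)] with i (hi : f i x ∈ U)
      simp [hi]
    · exact .of_forall fun i => by simp [hx]
  have hsymm i : μ (f i ⁻¹' U \ g ⁻¹' U) = μ (g ⁻¹' U \ f i ⁻¹' U) :=
    measure_sdiff_symm (hfU i).nullMeasurableSet hgU.nullMeasurableSet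
      (by rw [(hf i).measure_preimage hU.measurableSet.nullMeasurableSet,
        hg.measure_preimage hU.measurableSet.nullMeasurableSet])
      (ne_top_of_le_ne_top hμgU (measure_mono inter_subset_right))
  simpa [measure_symmDiff_eq (hfU _).nullMeasurableSet hgU.nullMeasurableSet, hsymm]
    using hlost.add hlost

theorem tendsto_measure_symmDiff_preimage [ν.OuterRegular]
    (hf : ∀ i, MeasurePreserving (f i) μ ν) (hg : MeasurePreserving g μ ν)
    (hfg : ∀ x, Tendsto (f · x) l (𝓝 (g x))) {s : Set Y} (hs : MeasurableSet s) (hνs : ν s ≠ ∞) :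
    Tendsto (fun i => μ ((f i ⁻¹' s) ∆ (g ⁻¹' s))) l (𝓝 0) := by
  rw [ENNReal.tendsto_nhds_zero]
  intro ε hε
  have hε3 : 0 < ε / 3 := ENNReal.div_pos hε.ne' ENNReal.ofNat_ne_top
  obtain ⟨U, hsU, hUo, hνU, hUs⟩ := hs.exists_isOpen_sdiff_lt hνs hε3.ne'
  have hsU' : ν (s ∆ U) ≤ ε / 3 := by rw [symmDiff_of_le hsU]; exact hUs.le
  have hmeas {φ : X → Y} (hφ : MeasurePreserving φ μ ν) :
      μ ((φ ⁻¹' s) ∆ (φ ⁻¹' U)) ≤ ε / 3 := by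
    rwa [← preimage_symmDiff,
      hφ.measure_preimage (hs.symmDiff hUo.measurableSet).nullMeasurableSet]
  filter_upwards [ENNReal.tendsto_nhds_zero.1
    (tendsto_measure_symmDiff_preimage_of_isOpen hf hg hfg hUo hνU.ne) _ hε3] with i hi
  calc μ ((f i ⁻¹' s) ∆ (g ⁻¹' s))
      ≤ μ ((f i ⁻¹' s) ∆ (f i ⁻¹' U)) + μ ((f i ⁻¹' U) ∆ (g ⁻¹' U))
          + μ ((g ⁻¹' U) ∆ (g ⁻¹' s)) :=
        (measure_symmDiff_le _ (g ⁻¹' U) _).trans (add_le_add_left (measure_symmDiff_le _ _ _) _)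
    _ ≤ ε / 3 + ε / 3 + ε / 3 := by
        gcongr
        · exact hmeas (hf i)
        · rw [symmDiff_comm]; exact hmeas hg
    _ = ε := ENNReal.add_thirds ε

theorem tendsto_Lp_compMeasurePreserving [ν.OuterRegular] {E : Type*} [NormedAddCommGroup E]
    {p : ℝ≥0∞} [Fact (1 ≤ p)] (hp : p ≠ ∞)
    (hf : ∀ i, MeasurePreserving (f i) μ ν) (hg : MeasurePreserving g μ ν)
    (hfg : ∀ x, Tendsto (f · x) l (𝓝 (g x))) (φ : Lp E p ν) :
    Tendsto (fun i => Lp.compMeasurePreserving (f i) (hf i) φ) l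
      (𝓝 (Lp.compMeasurePreserving g hg φ)) := by
  induction φ using Lp.induction hp with
  | indicatorConst c hs hνs =>
    simp only [Lp.simpleFunc.coe_indicatorConst, Lp.indicatorConstLp_compMeasurePreserving]
    exact tendsto_indicatorConstLp_set hp
      (tendsto_measure_symmDiff_preimage hf hg hfg hs hνs.ne)
  | add _ _ _ hφ hφ' => simpa only [map_add] using hφ.add hφ'
  | isClosed =>
    have hequi := LipschitzWith.uniformEquicontinuous _ 1 fun i =>
      (Lp.isometry_compMeasurePreserving (E := E) (p := p) (hf i)).lipschitz
    exact hequi.equicontinuous.isClosed_setOfPred_tendsto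
      (Lp.isometry_compMeasurePreserving hg).continuous

end PreimageContinuity

section AEStabilizer

variable (G : Type*) {α β : Type*} [Group G] [MeasurableSpace α] [MulAction G α]
  [MeasurableConstSMul G α] (μ : Measure α) [SMulInvariantMeasure G α μ]

def aestabilizerFun (f : α → β) : Subgroup G where
  carrier := {g | (fun x => f (g • x)) =ᵐ[μ] f}
  one_mem' := by simp
  mul_mem' {a b} ha hb := by
    simp_rw [Set.mem_ofPred_eq, mul_smul]
    exact ((measurePreserving_smul b μ).quasiMeasurePreserving.ae_eq_comp ha).trans hb
  inv_mem' {a} ha := by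
    have := ((measurePreserving_smul a⁻¹ μ).quasiMeasurePreserving.ae_eq_comp ha).symm
    simpa [Function.comp_def] using this

variable {G μ}

theorem mem_aestabilizerFun_iff_mk_smul_toLp_eq {E : Type*} [NormedAddCommGroup E] {p : ℝ≥0∞}
    {f : α → E} (hf : MemLp f p μ) (g : G) :
    g ∈ aestabilizerFun G μ f ↔ DomMulAct.mk g • hf.toLp f = hf.toLp f := by
  rw [DomMulAct.mk_smul_toLp, MemLp.toLp_eq_toLp_iff]
  rfl

theorem continuous_mk_smul_Lp [TopologicalSpace G] [FirstCountableTopology G]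
    [TopologicalSpace α] [OpensMeasurableSpace α] [ContinuousSMul G α] [μ.OuterRegular]
    {E : Type*} [NormedAddCommGroup E] {p : ℝ≥0∞} [Fact (1 ≤ p)] (hp : p ≠ ∞) (φ : Lp E p μ) :
    Continuous fun g : G => DomMulAct.mk g • φ :=
  continuous_iff_continuousAt.2 fun g => tendsto_Lp_compMeasurePreserving hp _ _
    (fun _ => (continuous_id.smul continuous_const).tendsto g) φ

theorem isClosed_aestabilizerFun [TopologicalSpace G] [FirstCountableTopology G]
    [TopologicalSpace α] [OpensMeasurableSpace α] [ContinuousSMul G α] [μ.OuterRegular]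
    {E : Type*} [NormedAddCommGroup E] {p : ℝ≥0∞} [Fact (1 ≤ p)] (hp : p ≠ ∞)
    {f : α → E} (hf : MemLp f p μ) : IsClosed (aestabilizerFun G μ f : Set G) := by
  have : (aestabilizerFun G μ f : Set G) = {g | DomMulAct.mk g • hf.toLp f = hf.toLp f} :=
    Set.ext (mem_aestabilizerFun_iff_mk_smul_toLp_eq hf)
  exact this ▸ isClosed_eq (continuous_mk_smul_Lp hp _) continuous_const

end AEStabilizer

theorem integral_inner_mk_smul_toLp {G X : Type*} [Group G] [MeasurableSpace G]
    [MeasurableSpace X] [MulAction G X] [MeasurableSMul₂ G X] {μ : Measure G} {lam : Measure X}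
    [IsProbabilityMeasure μ] [SFinite lam] [SMulInvariantMeasure G X lam]
    {ψ : X → ℝ} (hψ : MemLp ψ 2 lam) :
    ∫ g, ⟪DomMulAct.mk g • hψ.toLp ψ, hψ.toLp ψ⟫_ℝ ∂μ = ∫ x, (∫ g, ψ (g • x) ∂μ) * ψ x ∂lam := by
  have hact : MeasurePreserving (fun z : G × X => z.1 • z.2) (μ.prod lam) lam :=
    measurePreserving_snd.comp <| (MeasurePreserving.id μ).skew_product measurable_smul <|
      ae_of_all _ fun g => (measurePreserving_smul g lam).map_eq
  have hint : Integrable (fun z : G × X => ψ (z.1 • z.2) * ψ z.2) (μ.prod lam) :=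
    (hψ.comp_measurePreserving hact).integrable_mul
      (hψ.comp_measurePreserving measurePreserving_snd)
  have hinner (g : G) :
      ⟪DomMulAct.mk g • hψ.toLp ψ, hψ.toLp ψ⟫_ℝ = ∫ x, ψ (g • x) * ψ x ∂lam := by
    rw [L2.inner_def]
    refine integral_congr_ae ?_
    filter_upwards [DomMulAct.smul_Lp_ae_eq (DomMulAct.mk g) (hψ.toLp ψ),
      (measurePreserving_smul g lam).quasiMeasurePreserving.ae_eq_comp hψ.coeFn_toLp,
      hψ.coeFn_toLp] with x hgx (hψgx : hψ.toLp ψ (g • x) = ψ (g • x)) hψx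
    rw [hgx, hψx, Equiv.symm_apply_apply, hψgx, RCLike.inner_apply, conj_trivial, mul_comm]
  simp_rw [hinner, integral_integral_swap (f := fun g x => ψ (g • x) * ψ x) hint,
    integral_mul_const]

theorem markov_fixed_implies_invariant_general
    {X : Type*} [TopologicalSpace X] [LocallyCompactSpace X]
    [SecondCountableTopology X] [MeasurableSpace X] [BorelSpace X]
    {Γ : Type*} [Group Γ] [TopologicalSpace Γ] [IsTopologicalGroup Γ]
    [SecondCountableTopology Γ]
    [MeasurableSpace Γ] [BorelSpace Γ]
    [MulAction Γ X] [ContinuousSMul Γ X]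
    (lam : Measure X) [lam.Regular]
    (hinv : ∀ g : Γ, MeasurePreserving (fun x : X => g • x) lam lam)
    (μ : Measure Γ) [IsProbabilityMeasure μ]
    (hgen : (Subgroup.closure {g : Γ | ∀ U ∈ nhds g, μ U ≠ 0}).topologicalClosure = ⊤)
    (ψ : X → ℝ) (hψ : MemLp ψ 2 lam)
    (hfix : (fun x => ∫ g, ψ (g • x) ∂μ) =ᵐ[lam] ψ) :
    ∀ g : Γ, (fun x => ψ (g • x)) =ᵐ[lam] ψ := by
  have : SMulInvariantMeasure Γ X lam :=
    ⟨fun g _ hs => (hinv g).measure_preimage hs.nullMeasurableSet⟩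
  have : SigmaFinite lam := sigmaFinite_of_locallyFinite
  set Ψ := hψ.toLp ψ
  have hbarycenter : ∫ g, ⟪DomMulAct.mk g • Ψ, Ψ⟫_ℝ ∂μ = ‖Ψ‖ ^ 2 := by
    rw [integral_inner_mk_smul_toLp hψ, ← real_inner_self_eq_norm_sq, L2.inner_def]
    refine integral_congr_ae ?_
    filter_upwards [hfix, hψ.coeFn_toLp] with x hx hΨx
    rw [hx, hΨx, RCLike.inner_apply, conj_trivial]
  have hae : ∀ᵐ g ∂μ, g ∈ aestabilizerFun Γ lam ψ := by
    filter_upwards [ae_eq_of_norm_le_of_integral_inner_eq_norm_sq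
      (ae_of_all _ fun g => (DomMulAct.norm_smul_Lp _ _).le) hbarycenter] with g hg
    exact (mem_aestabilizerFun_iff_mk_smul_toLp_eq hψ g).2 hg
  have hclosed : IsClosed (aestabilizerFun Γ lam ψ : Set Γ) :=
    isClosed_aestabilizerFun ENNReal.ofNat_ne_top hψ
  have hsupp : {g : Γ | ∀ U ∈ nhds g, μ U ≠ 0} ⊆ aestabilizerFun Γ lam ψ := by
    simpa [← pos_iff_ne_zero, ← Measure.mem_support_iff_forall] using
      μ.support_subset_of_isClosed hclosed hae
  intro g
  have htop : ⊤ ≤ aestabilizerFun Γ lam ψ :=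
    hgen ▸ Subgroup.topologicalClosure_minimal _ ((Subgroup.closure_le _).2 hsupp) hclosed
  exact htop (Subgroup.mem_top g)

/-- If `ψ ∈ L²(X, λ)` is fixed by the Markov operator `P_μ` of a measure-preserving
action, and the support of `μ` generates `Γ` as a closed group, then `ψ` is
invariant under every element of `Γ` (up to `λ`-null sets). -/
theorem markov_fixed_implies_invariant
    {X : Type*} [TopologicalSpace X] [LocallyCompactSpace X]
    [SecondCountableTopology X] [MeasurableSpace X] [BorelSpace X]
    {Γ : Type*} [Group Γ] [TopologicalSpace Γ] [IsTopologicalGroup Γ]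
    [LocallyCompactSpace Γ] [SecondCountableTopology Γ]
    [MeasurableSpace Γ] [BorelSpace Γ]
    [MulAction Γ X] [ContinuousSMul Γ X]
    (lam : Measure X) [lam.Regular]
    (hinv : ∀ g : Γ, MeasurePreserving (fun x : X => g • x) lam lam)
    (μ : Measure Γ) [IsProbabilityMeasure μ]
    (hgen : (Subgroup.closure {g : Γ | ∀ U ∈ nhds g, μ U ≠ 0}).topologicalClosure = ⊤)
    (ψ : X → ℝ) (hψ : MemLp ψ 2 lam)
    (hfix : (fun x => ∫ g, ψ (g • x) ∂μ) =ᵐ[lam] ψ) :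
    ∀ g : Γ, (fun x => ψ (g • x)) =ᵐ[lam] ψ :=
  markov_fixed_implies_invariant_general lam hinv μ hgen ψ hψ hfix
end

section
/- Let H be a Hilbert space, (Γ, μ) a probability space, and g ↦ u_g a measurable map from Γ to isometries of H. Suppose ψ ∈ H satisfies ψ = ∫_Γ u_g ψ dμ(g) (Bochner integral). Then for μ-almost every g, u_g ψ = ψ. -/
open MeasureTheory

theorem ae_eq_of_norm_le_of_integral_eq {E : Type*} [NormedAddCommGroup E] [NormedSpace ℝ E]
    [CompleteSpace E] [StrictConvexSpace ℝ E] {α : Type*} [MeasurableSpace α] {μ : Measure α}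
    [IsProbabilityMeasure μ] {f : α → E} {x : E} (h_le : ∀ᵐ a ∂μ, ‖f a‖ ≤ ‖x‖)
    (hx : ∫ a, f a ∂μ = x) : ∀ᵐ a ∂μ, f a = x := by
  rcases ae_eq_const_or_norm_integral_lt_of_norm_le_const h_le with h_const | h_lt
  · rwa [average_eq_integral, hx] at h_const
  · simp [hx] at h_lt

theorem barycenter_of_isometries_general
    {H : Type*} [NormedAddCommGroup H] [InnerProductSpace ℝ H] [CompleteSpace H]
    {Γ : Type*} [MeasurableSpace Γ] (μ : Measure Γ) [IsProbabilityMeasure μ]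
    (u : Γ → H →ₗᵢ[ℝ] H) (ψ : H)
    (hbary : ψ = ∫ g, u g ψ ∂μ) :
    ∀ᵐ g ∂μ, u g ψ = ψ :=
  ae_eq_of_norm_le_of_integral_eq (ae_of_all μ fun g => ((u g).norm_map ψ).le) hbary.symm

/-- Barycenter rigidity in Hilbert spaces: if `ψ` is the `μ`-barycenter of its
images under a measurable family of isometries `u_g`, then `u_g ψ = ψ` for
`μ`-almost every `g`. -/
theorem barycenter_of_isometries
    {H : Type*} [NormedAddCommGroup H] [InnerProductSpace ℝ H] [CompleteSpace H]
    {Γ : Type*} [MeasurableSpace Γ] (μ : Measure Γ) [IsProbabilityMeasure μ]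
    (u : Γ → H →ₗᵢ[ℝ] H) (ψ : H)
    (hmeas : Integrable (fun g => u g ψ) μ)
    (hbary : ψ = ∫ g, u g ψ ∂μ) :
    ∀ᵐ g ∂μ, u g ψ = ψ :=
  barycenter_of_isometries_general μ u ψ hbary
end
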